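/- arXiv:1203.3149 — 5 statements merged into one kernel-verified Lean document; each statement's English description precedes it below -/
import Mathlib

section
/- Let s ∈ ℝ and let n be a positive integer. Let u : (0,∞) → ℝ be twice continuously differentiable. Then the following are equivalent: (i) u(r) − u(rτ) + (u(r) − u(r/τ)) τ^{2s−n} ≤ 0 for all r > 0 and all τ ≥ 1; (ii) u''(r) + (n − 2s + 1) u'(r)/r ≥ 0 for all r > 0. -/
/-!
In the variable `x = log r`, with `c = (n - 2s)/2`, put `w(x) = e^{cx} u(e^x)`. Multiplying (i)
at `(r, τ) = (e^m, e^t)` by `e^{c(m+t)}` turns it into `w(m+t) + w(m-t) ≥ 2 cosh(ct) w(m)` for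
`t ≥ 0`, while `e^{-(c+2)x} (w'' - c² w)` is the left side of (ii) at `r = e^x`. So it suffices
to show that `w(m+t) + w(m-t) ≥ 2 cosh(ct) w(m)` for all `m` and `t ≥ 0` iff `w'' ≥ c² w`.
The function `G(t) = w(m+t) + w(m-t) - 2 cosh(ct) w(m)` has `G(0) = G'(0) = 0` and
`G''(0) = 2 (w''(m) - c² w(m))`, which gives one direction; conversely `w'' ≥ c² w` yields
`G'' ≥ c² G`, and a comparison with `cosh(ct)` forces `G ≥ 0` on `t ≥ 0`.
-/

open Real Set

lemma nonneg_of_hasDerivAt_nonneg {f f' : ℝ → ℝ} (hf : ∀ t, HasDerivAt f (f' t) t)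
    (h0 : f 0 = 0) (hf' : ∀ t > 0, 0 ≤ f' t) {t : ℝ} (ht : 0 ≤ t) : 0 ≤ f t := by
  have hmono : MonotoneOn f (Ici 0) :=
    monotoneOn_of_hasDerivWithinAt_nonneg (convex_Ici 0)
      (fun x _ => (hf x).continuousAt.continuousWithinAt)
      (fun x _ => (hf x).hasDerivWithinAt) (fun x hx => hf' x (by simpa using hx))
  simpa [h0] using hmono self_mem_Ici ht ht

lemma neg_of_hasDerivAt_neg {f f' : ℝ → ℝ} {d : ℝ} (hf : ∀ t, HasDerivAt f (f' t) t)
    (h0 : f 0 = 0) (hf' : ∀ t ∈ Ioo 0 d, f' t < 0) {t : ℝ} (ht : t ∈ Ioc 0 d) : f t < 0 := by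
  have hanti : StrictAntiOn f (Icc 0 d) :=
    strictAntiOn_of_hasDerivWithinAt_neg (convex_Icc 0 d)
      (fun x _ => (hf x).continuousAt.continuousWithinAt)
      (fun x _ => (hf x).hasDerivWithinAt) (fun x hx => hf' x (by simpa using hx))
  simpa [h0] using hanti (left_mem_Icc.2 (ht.1.le.trans ht.2)) (Ioc_subset_Icc_self ht) ht.1

lemma nonneg_deriv_deriv_of_nonneg {f f' f'' : ℝ → ℝ}
    (hf : ∀ t, HasDerivAt f (f' t) t) (hf' : ∀ t, HasDerivAt f' (f'' t) t)
    (hc : ContinuousAt f'' 0) (h0 : f 0 = 0) (h0' : f' 0 = 0) (hnonneg : ∀ t ≥ 0, 0 ≤ f t) :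
    0 ≤ f'' 0 := by
  by_contra! hneg
  obtain ⟨d, hd, hd_neg⟩ : ∃ d > 0, ∀ t ∈ Ioo 0 d, f'' t < 0 := by
    obtain ⟨ε, hε, hball⟩ := Metric.eventually_nhds_iff.1 (hc.eventually (gt_mem_nhds hneg))
    exact ⟨ε, hε, fun t ht => hball (by rw [dist_zero_right, norm_of_nonneg ht.1.le]; exact ht.2)⟩
  have hf'_neg : ∀ t ∈ Ioo 0 d, f' t < 0 := fun t ht =>
    neg_of_hasDerivAt_neg hf' h0' hd_neg (Ioo_subset_Ioc_self ht)
  exact (neg_of_hasDerivAt_neg hf h0 hf'_neg ⟨hd, le_rfl⟩).not_ge (hnonneg d hd.le)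

lemma hasDerivAt_cosh_mul (c t : ℝ) : HasDerivAt (fun t => cosh (c * t)) (c * sinh (c * t)) t := by
  simpa [mul_comm] using ((hasDerivAt_id t).const_mul c).cosh

lemma hasDerivAt_sinh_mul (c t : ℝ) : HasDerivAt (fun t => sinh (c * t)) (c * cosh (c * t)) t := by
  simpa [mul_comm] using ((hasDerivAt_id t).const_mul c).sinh

lemma nonneg_of_sq_mul_le_deriv_deriv (c : ℝ) {f f' f'' : ℝ → ℝ}
    (hf : ∀ t, HasDerivAt f (f' t) t) (hf' : ∀ t, HasDerivAt f' (f'' t) t)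
    (h0 : f 0 = 0) (h0' : f' 0 = 0) (hle : ∀ t ≥ 0, c ^ 2 * f t ≤ f'' t)
    {t : ℝ} (ht : 0 ≤ t) : 0 ≤ f t := by
  -- `W` is the Wronskian of `f` and `cosh (c t)`, and `(f / cosh (c t))' = W / cosh (c t) ^ 2`.
  set W : ℝ → ℝ := fun t => f' t * cosh (c * t) - c * (f t * sinh (c * t))
  have hW : ∀ t, HasDerivAt W (cosh (c * t) * (f'' t - c ^ 2 * f t)) t := fun t =>
    (((hf' t).mul (hasDerivAt_cosh_mul c t)).sub
      (((hf t).mul (hasDerivAt_sinh_mul c t)).const_mul c)).congr_deriv (by ring)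
  have hW_nonneg : ∀ t ≥ 0, 0 ≤ W t := fun t ht =>
    nonneg_of_hasDerivAt_nonneg hW (by simp [W, h0, h0'])
      (fun t ht => mul_nonneg (cosh_pos _).le (sub_nonneg.2 (hle t ht.le))) ht
  have hquot : ∀ t, HasDerivAt (fun t => f t / cosh (c * t)) (W t / cosh (c * t) ^ 2) t :=
    fun t => ((hf t).div (hasDerivAt_cosh_mul c t) (cosh_pos _).ne').congr_deriv (by ring)
  have hquot_nonneg : 0 ≤ f t / cosh (c * t) := nonneg_of_hasDerivAt_nonneg hquot (by simp [h0])
    (fun t ht => div_nonneg (hW_nonneg t ht.le) (sq_nonneg _)) ht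
  simpa using (le_div_iff₀ (cosh_pos _)).1 hquot_nonneg

theorem two_cosh_mul_le_add_iff (c : ℝ) {w w' w'' : ℝ → ℝ} (hw : ∀ x, HasDerivAt w (w' x) x)
    (hw' : ∀ x, HasDerivAt w' (w'' x) x) (hc : Continuous w'') :
    (∀ m, ∀ t ≥ 0, 2 * cosh (c * t) * w m ≤ w (m + t) + w (m - t)) ↔
      ∀ x, c ^ 2 * w x ≤ w'' x := by
  have hG : ∀ m t, HasDerivAt (fun t => w (m + t) + w (m - t) - 2 * cosh (c * t) * w m)
      (w' (m + t) - w' (m - t) - 2 * (c * sinh (c * t)) * w m) t := fun m t =>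
    ((((hw _).comp_const_add m t).add ((hw _).comp_const_sub m t)).sub
      (((hasDerivAt_cosh_mul c t).const_mul 2).mul_const (w m))).congr_deriv (by ring)
  have hG' : ∀ m t, HasDerivAt (fun t => w' (m + t) - w' (m - t) - 2 * (c * sinh (c * t)) * w m)
      (w'' (m + t) + w'' (m - t) - 2 * (c * (c * cosh (c * t))) * w m) t := fun m t =>
    ((((hw' _).comp_const_add m t).sub ((hw' _).comp_const_sub m t)).sub
      ((((hasDerivAt_sinh_mul c t).const_mul c).const_mul 2).mul_const (w m))).congr_deriv
      (by ring)
  constructor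
  · intro h x
    have := nonneg_deriv_deriv_of_nonneg (hG x) (hG' x) (by fun_prop) (by simp; ring) (by simp)
      fun t ht => sub_nonneg.2 (h x t ht)
    simp only [add_zero, sub_zero, mul_zero, cosh_zero, mul_one, sub_nonneg] at this
    linarith
  · intro h m t ht
    have := nonneg_of_sq_mul_le_deriv_deriv c (hG m) (hG' m) (by simp; ring) (by simp)
      (fun t _ => by linarith [h (m + t), h (m - t)]) ht
    linarith

noncomputable def emdenFowler (c : ℝ) (u : ℝ → ℝ) (x : ℝ) : ℝ := exp (c * x) * u (exp x)

lemma hasDerivAt_emdenFowler (c : ℝ) {u : ℝ → ℝ} {d x : ℝ} (hu : HasDerivAt u d (exp x)) :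
    HasDerivAt (emdenFowler c u) (exp (c * x) * (c * u (exp x) + exp x * d)) x := by
  have hexp : HasDerivAt (fun x => exp (c * x)) (exp (c * x) * c) x := by
    simpa using ((hasDerivAt_id x).const_mul c).exp
  refine (hexp.mul (hu.comp x (hasDerivAt_exp x))).congr_deriv ?_
  simp only [Function.comp_apply]
  ring

lemma hasDerivAt_emdenFowler_deriv (c : ℝ) {u u' u'' : ℝ → ℝ}
    (hu : ∀ r > 0, HasDerivAt u (u' r) r) (hu' : ∀ r > 0, HasDerivAt u' (u'' r) r) (x : ℝ) :
    HasDerivAt (emdenFowler c fun r => c * u r + r * u' r)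
      (c ^ 2 * emdenFowler c u x +
        exp ((c + 2) * x) * (u'' (exp x) + (2 * c + 1) * u' (exp x) / exp x)) x := by
  have hv : HasDerivAt (fun r => c * u r + r * u' r)
      (c * u' (exp x) + (1 * u' (exp x) + exp x * u'' (exp x))) (exp x) :=
    ((hu _ (exp_pos x)).const_mul c).add ((hasDerivAt_id _).mul (hu' _ (exp_pos x)))
  refine (hasDerivAt_emdenFowler c hv).congr_deriv ?_
  rw [emdenFowler, add_mul, exp_add, two_mul x, exp_add]
  field_simp
  ring

lemma emdenFowler_add_add_sub_sub_eq (c : ℝ) (u : ℝ → ℝ) (m t : ℝ) :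
    emdenFowler c u (m + t) + emdenFowler c u (m - t) - 2 * cosh (c * t) * emdenFowler c u m =
      exp (c * (m + t)) * -(u (exp m) - u (exp m * exp t) +
        (u (exp m) - u (exp m / exp t)) * exp t ^ (-(2 * c))) := by
  rw [rpow_def_of_pos (exp_pos t), log_exp, cosh_eq,
    show t * -(2 * c) = -(c * t) + -(c * t) by ring, exp_add, exp_neg]
  simp only [emdenFowler, mul_add, mul_sub, exp_add, exp_sub]
  field_simp
  ring

lemma two_cosh_mul_emdenFowler_le_iff (c : ℝ) (u : ℝ → ℝ) (m t : ℝ) :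
    2 * cosh (c * t) * emdenFowler c u m ≤ emdenFowler c u (m + t) + emdenFowler c u (m - t) ↔
      u (exp m) - u (exp m * exp t) + (u (exp m) - u (exp m / exp t)) * exp t ^ (-(2 * c)) ≤ 0 := by
  rw [← sub_nonneg, emdenFowler_add_add_sub_sub_eq, mul_nonneg_iff_of_pos_left (exp_pos _),
    neg_nonneg]

lemma continuous_comp_exp_of_hasDerivAt {u u' : ℝ → ℝ} (hu : ∀ r > 0, HasDerivAt u (u' r) r) :
    Continuous fun x => u (exp x) :=
  continuous_iff_continuousAt.2 fun x => (hu _ (exp_pos x)).continuousAt.comp (by fun_prop)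

lemma forall_pos_iff_forall_exp {P : ℝ → Prop} : (∀ r > 0, P r) ↔ ∀ x, P (exp x) :=
  ⟨fun h x => h _ (exp_pos x), fun h r hr => exp_log hr ▸ h (log r)⟩

lemma forall_one_le_iff_forall_exp {P : ℝ → Prop} : (∀ τ ≥ 1, P τ) ↔ ∀ t ≥ 0, P (exp t) :=
  ⟨fun h _ ht => h _ (one_le_exp ht),
    fun h τ hτ => exp_log (zero_lt_one.trans_le hτ) ▸ h (log τ) (log_nonneg hτ)⟩

theorem stmt_2_general (s : ℝ) (n : ℕ)
    (u u' u'' : ℝ → ℝ)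
    (hu' : ∀ r > (0:ℝ), HasDerivAt u (u' r) r)
    (hu'' : ∀ r > (0:ℝ), HasDerivAt u' (u'' r) r)
    (hcont : ContinuousOn u'' (Set.Ioi 0)) :
    (∀ r > (0:ℝ), ∀ τ ≥ (1:ℝ),
        u r - u (r * τ) + (u r - u (r / τ)) * τ ^ (2 * s - (n : ℝ)) ≤ 0) ↔
    (∀ r > (0:ℝ), 0 ≤ u'' r + ((n : ℝ) - 2 * s + 1) * u' r / r) := by
  set c : ℝ := ((n : ℝ) - 2 * s) / 2
  rw [show 2 * s - (n : ℝ) = -(2 * c) by ring, show (n : ℝ) - 2 * s + 1 = 2 * c + 1 by ring]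
  have hw : ∀ x, HasDerivAt (emdenFowler c u) (emdenFowler c (fun r => c * u r + r * u' r) x) x :=
    fun x => hasDerivAt_emdenFowler c (hu' _ (exp_pos x))
  have hw''_cont : Continuous fun x => c ^ 2 * emdenFowler c u x +
      exp ((c + 2) * x) * (u'' (exp x) + (2 * c + 1) * u' (exp x) / exp x) := by
    have hexp_mul : ∀ a : ℝ, Continuous fun x => exp (a * x) := fun a => by fun_prop
    exact (continuous_const.mul ((hexp_mul c).mul (continuous_comp_exp_of_hasDerivAt hu'))).add
      ((hexp_mul _).mul ((hcont.comp_continuous continuous_exp exp_pos).add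
        ((continuous_const.mul (continuous_comp_exp_of_hasDerivAt hu'')).div continuous_exp
          exp_ne_zero)))
  rw [forall_pos_iff_forall_exp, forall_pos_iff_forall_exp]
  simp only [forall_one_le_iff_forall_exp, ← two_cosh_mul_emdenFowler_le_iff]
  rw [two_cosh_mul_le_add_iff c hw (hasDerivAt_emdenFowler_deriv c hu' hu'') hw''_cont]
  exact forall_congr' fun x => by
    rw [le_add_iff_nonneg_right, mul_nonneg_iff_of_pos_left (exp_pos _)]

/-- For a radial `C²` function `u` on `(0,∞)` and any real `s`, the pointwise inequality
`u(r) - u(rτ) + (u(r) - u(r/τ))τ^{2s-n} ≤ 0` (for all `r > 0`, `τ ≥ 1`) is equivalent to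
the differential inequality `u''(r) + (n - 2s + 1) u'(r)/r ≥ 0` (for all `r > 0`). -/
theorem stmt_2 (s : ℝ) (n : ℕ) (hn : 0 < n)
    (u u' u'' : ℝ → ℝ)
    (hu' : ∀ r > (0:ℝ), HasDerivAt u (u' r) r)
    (hu'' : ∀ r > (0:ℝ), HasDerivAt u' (u'' r) r)
    (hcont : ContinuousOn u'' (Set.Ioi 0)) :
    (∀ r > (0:ℝ), ∀ τ ≥ (1:ℝ),
        u r - u (r * τ) + (u r - u (r / τ)) * τ ^ (2 * s - (n : ℝ)) ≤ 0) ↔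
    (∀ r > (0:ℝ), 0 ≤ u'' r + ((n : ℝ) - 2 * s + 1) * u' r / r) :=
  stmt_2_general s n u u' u'' hu' hu'' hcont
end

section
/- Let s ∈ ℝ, let n be a positive integer, let β > 0, and set f_β(r) = −(1+r²)^{−β/2} for r > 0. Then the condition: f_β(r) − f_β(rτ) + (f_β(r) − f_β(r/τ)) τ^{2s−n} ≤ 0 for all r > 0 and all τ ≥ 1, holds if and only if β ≤ n − 2s. Equivalently, f_β''(r) + (n − 2s + 1) f_β'(r)/r ≥ 0 for all r > 0 if and only if β ≤ n − 2s. -/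
/-- `f_β(r) = -(1+r²)^{-β/2}`. -/
noncomputable def fbeta (β r : ℝ) : ℝ := -((1 + r ^ 2) ^ (-(β / 2)))

/-!
Put `γ = n - 2s` and `g(x) = x^{-β/2}`, so that `f_β(r) = -g(1 + r²)`. Since
`g(τ²x) = τ^{-β} g(x)`, for `γ = β` the secant criterion becomes
`g(1 + r²τ²) - g(1 + r²) ≤ g(τ² + r²τ²) - g(τ² + r²)`: the increments of the convex function `g`
over two intervals of the same length `r²(τ² - 1)`, the second lying to the right of the first.
A larger `γ` only shrinks the nonnegative term `(f_β(r) - f_β(r/τ)) τ^{-γ}`. Conversely, divide the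
criterion at a fixed `τ > 1` by `-f_β(r)` and let `r → ∞`: as `f_β(rτ)/f_β(r) → τ^{-β}`, the limit
is `(τ^β - 1)(τ^{-γ} - τ^{-β}) ≤ 0`, whence `β ≤ γ`.
The differential form is explicit:
`f_β'' + (γ + 1) f_β'/r = β (1 + r²)^{-β/2-2} ((γ + 2) + (γ - β) r²)`.
-/

open Real Filter Topology Set

lemma ConvexOn.map_add_sub_map_le {s : Set ℝ} {f : ℝ → ℝ} (hf : ConvexOn ℝ s f) {a w c : ℝ}
    (ha : a ∈ s) (hwc : w + c ∈ s) (haw : a ≤ w) (hc : 0 ≤ c) :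
    f (a + c) - f a ≤ f (w + c) - f w := by
  rcases hc.eq_or_lt with rfl | hc
  · simp
  have hmem : Icc a (w + c) ⊆ s := hf.1.ordConnected.out ha hwc
  have hac : a + c ∈ s := hmem ⟨by linarith, by linarith⟩
  have hw : w ∈ s := hmem ⟨haw, by linarith⟩
  have h₁ := hf.secant_mono ha hac hwc (by linarith) (by linarith) (by linarith)
  have h₂ := hf.secant_mono hwc ha hw (by linarith) (by linarith) haw
  have hmid : (f (w + c) - f a) / (w + c - a) = (f a - f (w + c)) / (a - (w + c)) := by
    rw [← neg_div_neg_eq]; ring_nf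
  have hend : (f w - f (w + c)) / (w - (w + c)) = (f (w + c) - f w) / c := by
    rw [← neg_div_neg_eq]; ring_nf
  rw [add_sub_cancel_left] at h₁
  rw [hend] at h₂
  exact (div_le_div_iff_of_pos_right hc).1 (h₁.trans (hmid ▸ h₂))

lemma convexOn_rpow_of_nonpos {p : ℝ} (hp : p ≤ 0) : ConvexOn ℝ (Ioi 0) fun x : ℝ => x ^ p := by
  refine MonotoneOn.convexOn_of_deriv (convex_Ioi 0) ?_ ?_ ?_
  · exact fun x hx => (continuousAt_rpow_const x p (Or.inl (ne_of_gt hx))).continuousWithinAt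
  · rw [interior_Ioi]
    exact fun x hx => (differentiableAt_rpow_const_of_ne p (ne_of_gt hx)).differentiableWithinAt
  · rw [interior_Ioi]
    intro x hx y _ hxy
    simp only [Real.deriv_rpow_const]
    exact mul_le_mul_of_nonpos_left (rpow_le_rpow_of_nonpos hx hxy (by linarith)) hp

lemma sq_rpow_neg_half {τ : ℝ} (hτ : 0 ≤ τ) (β : ℝ) : (τ ^ 2) ^ (-(β / 2)) = τ ^ (-β) := by
  rw [← rpow_natCast, ← rpow_mul hτ]
  congr 1
  ring

lemma fbeta_le_fbeta {β x y : ℝ} (hβ : 0 ≤ β) (hx : 0 ≤ x) (hxy : x ≤ y) :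
    fbeta β x ≤ fbeta β y := by
  rw [fbeta, fbeta, neg_le_neg_iff]
  exact rpow_le_rpow_of_nonpos (by positivity) (by gcongr) (by linarith)

lemma rpow_neg_mul_fbeta {τ : ℝ} (hτ : 0 < τ) (β x : ℝ) :
    τ ^ (-β) * fbeta β x = -((τ ^ 2 + (τ * x) ^ 2) ^ (-(β / 2))) := by
  rw [fbeta, mul_neg, ← sq_rpow_neg_half hτ.le, ← mul_rpow (by positivity) (by positivity)]
  ring_nf

theorem fbeta_secant_criterion_of_le {β γ r τ : ℝ} (hβ : 0 ≤ β) (hβγ : β ≤ γ) (hr : 0 < r)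
    (hτ : 1 ≤ τ) :
    fbeta β r - fbeta β (r * τ) + (fbeta β r - fbeta β (r / τ)) * τ ^ (-γ) ≤ 0 := by
  have hτ₀ : 0 < τ := by linarith
  have hdiff : 0 ≤ fbeta β r - fbeta β (r / τ) :=
    sub_nonneg.2 (fbeta_le_fbeta hβ (by positivity) (div_le_self hr.le hτ))
  have hpow : τ ^ (-γ) ≤ τ ^ (-β) := rpow_le_rpow_of_exponent_le hτ (by linarith)
  have hconv := (convexOn_rpow_of_nonpos (by linarith : -(β / 2) ≤ 0)).map_add_sub_map_le
    (a := 1 + r ^ 2) (w := τ ^ 2 + r ^ 2) (c := (r * τ) ^ 2 - r ^ 2)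
    (by simp only [mem_Ioi]; positivity) (by simp only [mem_Ioi]; nlinarith)
    (by nlinarith) (by nlinarith [mul_le_mul_of_nonneg_left hτ hr.le])
  have hscale_r := rpow_neg_mul_fbeta hτ₀ β r
  have hscale_div := rpow_neg_mul_fbeta hτ₀ β (r / τ)
  rw [mul_div_cancel₀ r hτ₀.ne'] at hscale_div
  calc fbeta β r - fbeta β (r * τ) + (fbeta β r - fbeta β (r / τ)) * τ ^ (-γ)
      ≤ fbeta β r - fbeta β (r * τ) + (fbeta β r - fbeta β (r / τ)) * τ ^ (-β) := by gcongr
    _ ≤ 0 := by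
      simp only [fbeta] at hscale_r hscale_div ⊢
      ring_nf at hconv hscale_r hscale_div ⊢
      linarith

lemma fbeta_neg (β r : ℝ) : fbeta β r < 0 :=
  neg_neg_of_pos (rpow_pos_of_pos (by positivity) _)

lemma tendsto_one_add_mul_sq_div_one_add_sq (c : ℝ) :
    Tendsto (fun r : ℝ => (1 + c * r ^ 2) / (1 + r ^ 2)) atTop (𝓝 c) := by
  have h : Tendsto (fun r : ℝ => c + (1 - c) / (1 + r ^ 2)) atTop (𝓝 (c + 0)) :=
    tendsto_const_nhds.add (tendsto_const_nhds.div_atTop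
      (tendsto_atTop_add_const_left _ 1 (tendsto_pow_atTop two_ne_zero)))
  rw [add_zero] at h
  refine h.congr fun r => ?_
  field_simp
  ring

theorem tendsto_fbeta_mul_div_fbeta (β : ℝ) {τ : ℝ} (hτ : 0 < τ) :
    Tendsto (fun r => fbeta β (r * τ) / fbeta β r) atTop (𝓝 (τ ^ (-β))) := by
  have h := (tendsto_one_add_mul_sq_div_one_add_sq (τ ^ 2)).rpow_const
    (p := -(β / 2)) (Or.inl (by positivity))
  rw [sq_rpow_neg_half hτ.le] at h
  refine h.congr fun r => ?_
  rw [fbeta, fbeta, neg_div_neg_eq, ← div_rpow (by positivity) (by positivity)]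
  ring_nf

theorem le_of_fbeta_secant_criterion {β γ τ : ℝ} (hβ : 0 < β) (hτ : 1 < τ)
    (H : ∀ r > 0, fbeta β r - fbeta β (r * τ) + (fbeta β r - fbeta β (r / τ)) * τ ^ (-γ) ≤ 0) :
    β ≤ γ := by
  have hτ₀ : 0 < τ := by linarith
  have hlim := ((tendsto_fbeta_mul_div_fbeta β hτ₀).sub_const 1).add
    (((tendsto_fbeta_mul_div_fbeta β (inv_pos.2 hτ₀)).sub_const 1).mul_const (τ ^ (-γ)))
  have hnonpos : ∀ᶠ r in atTop, fbeta β (r * τ) / fbeta β r - 1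
      + (fbeta β (r * τ⁻¹) / fbeta β r - 1) * τ ^ (-γ) ≤ 0 := by
    filter_upwards [eventually_gt_atTop 0] with r hr
    have hf := fbeta_neg β r
    have key : fbeta β (r * τ) / fbeta β r - 1 + (fbeta β (r * τ⁻¹) / fbeta β r - 1) * τ ^ (-γ)
        = (fbeta β r - fbeta β (r * τ) + (fbeta β r - fbeta β (r / τ)) * τ ^ (-γ))
          / (-fbeta β r) := by
      rw [← div_eq_mul_inv]
      field_simp [hf.ne]
      ring
    rw [key]
    exact div_nonpos_of_nonpos_of_nonneg (H r hr) (by linarith)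
  have hle := le_of_tendsto hlim hnonpos
  have hinv : τ⁻¹ ^ (-β) = τ ^ β := by rw [inv_rpow hτ₀.le, rpow_neg hτ₀.le, inv_inv]
  rw [hinv] at hle
  have hβpos : 1 < τ ^ β := one_lt_rpow hτ hβ
  have hcancel : τ ^ (-β) * τ ^ β = 1 := by rw [← rpow_add hτ₀]; simp
  have hγβ : τ ^ (-γ) ≤ τ ^ (-β) := by
    by_contra! hlt
    nlinarith [mul_pos (sub_pos.2 hβpos) (sub_pos.2 hlt)]
  have := (rpow_le_rpow_left_iff hτ).1 hγβ
  linarith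

lemma hasDerivAt_one_add_sq_rpow (p r : ℝ) :
    HasDerivAt (fun x : ℝ => (1 + x ^ 2) ^ p) (p * (1 + r ^ 2) ^ (p - 1) * (2 * r)) r := by
  have h : HasDerivAt (fun x : ℝ => 1 + x ^ 2) (2 * r) r := by
    simpa using (hasDerivAt_pow 2 r).const_add 1
  convert h.rpow_const (p := p) (Or.inl (by positivity)) using 1
  ring

lemma deriv_fbeta (β : ℝ) : deriv (fbeta β) = fun r => β * r * (1 + r ^ 2) ^ (-(β / 2) - 1) :=
  funext fun r => ((hasDerivAt_one_add_sq_rpow (-(β / 2)) r).neg.congr_deriv (by ring)).deriv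

lemma deriv_deriv_fbeta (β r : ℝ) :
    deriv (deriv (fbeta β)) r = β * (1 + r ^ 2) ^ (-(β / 2) - 2) * (1 - (β + 1) * r ^ 2) := by
  rw [deriv_fbeta]
  have h : HasDerivAt (fun x => β * x * (1 + x ^ 2) ^ (-(β / 2) - 1)) _ r :=
    ((hasDerivAt_id' r).const_mul β).mul (hasDerivAt_one_add_sq_rpow _ r)
  rw [h.deriv, show -(β / 2) - 1 - 1 = -(β / 2) - 2 by ring,
    show -(β / 2) - 1 = -(β / 2) - 2 + 1 by ring, rpow_add_one (by positivity : (1 + r ^ 2 : ℝ) ≠ 0)]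
  ring

lemma deriv_deriv_fbeta_add_deriv_fbeta_div (β γ : ℝ) {r : ℝ} (hr : r ≠ 0) :
    deriv (deriv (fbeta β)) r + (γ + 1) * deriv (fbeta β) r / r
      = β * (1 + r ^ 2) ^ (-(β / 2) - 2) * ((γ + 2) + (γ - β) * r ^ 2) := by
  rw [deriv_deriv_fbeta, deriv_fbeta]
  beta_reduce
  rw [show -(β / 2) - 1 = -(β / 2) - 2 + 1 by ring,
    rpow_add_one (by positivity : (1 + r ^ 2 : ℝ) ≠ 0)]
  field_simp
  ring

lemma nonneg_of_forall_pos_add_mul_nonneg {a b : ℝ} (h : ∀ t > 0, 0 ≤ a + b * t) : 0 ≤ b := by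
  by_contra! hb
  have ht : 0 < (|a| + 1) / -b := div_pos (by positivity) (neg_pos.2 hb)
  have := h _ ht
  rw [mul_div_assoc', mul_comm, mul_div_assoc, div_neg, div_self hb.ne] at this
  linarith [le_abs_self a]

theorem fbeta_deriv_criterion_iff {β γ : ℝ} (hβ : 0 < β) :
    (∀ r > 0, 0 ≤ deriv (deriv (fbeta β)) r + (γ + 1) * deriv (fbeta β) r / r) ↔ β ≤ γ := by
  have hiff : ∀ r > (0 : ℝ), 0 ≤ deriv (deriv (fbeta β)) r + (γ + 1) * deriv (fbeta β) r / r
      ↔ 0 ≤ (γ + 2) + (γ - β) * r ^ 2 := fun r hr => by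
    rw [deriv_deriv_fbeta_add_deriv_fbeta_div β γ hr.ne']
    exact mul_nonneg_iff_of_pos_left (by positivity)
  constructor
  · intro H
    have := nonneg_of_forall_pos_add_mul_nonneg fun t ht =>
      sq_sqrt ht.le ▸ (hiff _ (sqrt_pos.2 ht)).1 (H _ (sqrt_pos.2 ht))
    linarith
  · intro hβγ r hr
    rw [hiff r hr]
    have : 0 ≤ (γ - β) * r ^ 2 := mul_nonneg (by linarith) (sq_nonneg r)
    linarith

theorem stmt_4_general (s : ℝ) (n : ℕ) (β : ℝ) (hβ : 0 < β) :
    ((∀ r > (0:ℝ), ∀ τ ≥ (1:ℝ),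
        fbeta β r - fbeta β (r * τ) +
          (fbeta β r - fbeta β (r / τ)) * τ ^ (2 * s - (n : ℝ)) ≤ 0) ↔
      β ≤ (n : ℝ) - 2 * s) ∧
    ((∀ r > (0:ℝ),
        0 ≤ deriv (deriv (fbeta β)) r + ((n : ℝ) - 2 * s + 1) * deriv (fbeta β) r / r) ↔
      β ≤ (n : ℝ) - 2 * s) := by
  rw [show 2 * s - (n : ℝ) = -((n : ℝ) - 2 * s) by ring]
  exact ⟨⟨fun H => le_of_fbeta_secant_criterion hβ one_lt_two fun r hr => H r hr 2 one_le_two,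
    fun h _ hr _ hτ => fbeta_secant_criterion_of_le hβ.le h hr hτ⟩, fbeta_deriv_criterion_iff hβ⟩

/-- For `f_β(r) = -(1+r²)^{-β/2}` with `β > 0` and any real `s`, the pointwise inequality
`f_β(r) - f_β(rτ) + (f_β(r) - f_β(r/τ))τ^{2s-n} ≤ 0` (for all `r > 0`, `τ ≥ 1`) holds iff
`β ≤ n - 2s`; equivalently `f_β'' + (n-2s+1) f_β'/r ≥ 0` on `(0,∞)` iff `β ≤ n - 2s`. -/
theorem stmt_4 (s : ℝ) (n : ℕ) (hn : 0 < n) (β : ℝ) (hβ : 0 < β) :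
    ((∀ r > (0:ℝ), ∀ τ ≥ (1:ℝ),
        fbeta β r - fbeta β (r * τ) +
          (fbeta β r - fbeta β (r / τ)) * τ ^ (2 * s - (n : ℝ)) ≤ 0) ↔
      β ≤ (n : ℝ) - 2 * s) ∧
    ((∀ r > (0:ℝ),
        0 ≤ deriv (deriv (fbeta β)) r + ((n : ℝ) - 2 * s + 1) * deriv (fbeta β) r / r) ↔
      β ≤ (n : ℝ) - 2 * s) :=
  stmt_4_general s n β hβ
end

section
/- Let γ ∈ ℝ and let φ : ℝ → ℝ be twice differentiable with φ(0) = 0 and φ''(x) + γ·φ'(x) ≥ 0 for all x ∈ ℝ. Then φ(x)·e^{γx} + φ(−x) ≥ 0 for all x ≥ 0. -/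
/-!
Put `ψ(x) = φ'(x)e^{γx} - φ'(-x) - γφ(-x)`. Its derivative is
`(φ'' + γφ')(x)e^{γx} + (φ'' + γφ')(-x) ≥ 0` and `ψ(0) = 0`, so `ψ ≥ 0` on `[0, ∞)`.
Now `w(x) = φ(x) + φ(-x)e^{-γx}` has derivative `ψ(x)e^{-γx}` and `w(0) = 0`, so `w ≥ 0`
on `[0, ∞)` as well, and `φ(x)e^{γx} + φ(-x) = w(x)e^{γx}`.
-/

open Real Set

lemma nonneg_of_hasDerivAt_of_nonneg {f f' : ℝ → ℝ} (hf : ∀ x, HasDerivAt f (f' x) x)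
    (hf' : ∀ x, 0 ≤ x → 0 ≤ f' x) (h0 : f 0 = 0) {x : ℝ} (hx : 0 ≤ x) : 0 ≤ f x := by
  have hmono : MonotoneOn f (Ici 0) :=
    monotoneOn_of_hasDerivWithinAt_nonneg (convex_Ici 0)
      (fun y _ => (hf y).continuousAt.continuousWithinAt)
      (fun y _ => (hf y).hasDerivWithinAt)
      (fun y hy => hf' y (le_of_lt (by simpa using hy)))
  simpa [h0] using hmono self_mem_Ici (mem_Ici.mpr hx) hx

lemma hasDerivAt_exp_const_mul (γ x : ℝ) :
    HasDerivAt (fun x => exp (γ * x)) (γ * exp (γ * x)) x :=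
  ((hasDerivAt_id x).const_mul γ).exp.congr_deriv (by simp [mul_comm])

section

variable {γ : ℝ} {φ φ' φ'' : ℝ → ℝ}
  (hφ' : ∀ x, HasDerivAt φ (φ' x) x) (hφ'' : ∀ x, HasDerivAt φ' (φ'' x) x)
  (h0 : φ 0 = 0)

include hφ' hφ'' h0 in
lemma reflect_le_deriv_mul_exp (hineq : ∀ x, 0 ≤ φ'' x + γ * φ' x) {x : ℝ} (hx : 0 ≤ x) :
    φ' (-x) + γ * φ (-x) ≤ φ' x * exp (γ * x) := by
  have hderiv : ∀ y, HasDerivAt (fun y => φ' y * exp (γ * y) - (φ' (-y) + γ * φ (-y)))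
      ((φ'' y + γ * φ' y) * exp (γ * y) + (φ'' (-y) + γ * φ' (-y))) y := fun y => by
    have hreflect := ((hφ'' (-y)).add ((hφ' (-y)).const_mul γ)).comp y (hasDerivAt_neg y)
    exact (((hφ'' y).mul (hasDerivAt_exp_const_mul γ y)).sub hreflect).congr_deriv (by ring)
  have := nonneg_of_hasDerivAt_of_nonneg hderiv
    (fun y _ => add_nonneg (mul_nonneg (hineq y) (exp_pos _).le) (hineq (-y)))
    (by simp [h0]) hx
  linarith

include hφ' h0 in
lemma add_reflect_mul_exp_nonneg
    (hψ : ∀ x, 0 ≤ x → φ' (-x) + γ * φ (-x) ≤ φ' x * exp (γ * x)) {x : ℝ} (hx : 0 ≤ x) :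
    0 ≤ φ x + φ (-x) * exp (-(γ * x)) := by
  have hderiv : ∀ y, HasDerivAt (fun y => φ y + φ (-y) * exp (-(γ * y)))
      ((φ' y * exp (γ * y) - (φ' (-y) + γ * φ (-y))) * exp (-(γ * y))) y := fun y => by
    have hreflect := (hφ' (-y)).comp y (hasDerivAt_neg y)
    have hexp := hasDerivAt_exp_const_mul (-γ) y
    simp only [neg_mul] at hexp
    refine ((hφ' y).add (hreflect.mul hexp)).congr_deriv ?_
    have hcancel : exp (γ * y) * exp (-(γ * y)) = 1 := by rw [← exp_add, add_neg_cancel, exp_zero]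
    simp only [Function.comp_apply]
    linear_combination (-φ' y) * hcancel
  exact nonneg_of_hasDerivAt_of_nonneg hderiv
    (fun y hy => mul_nonneg (sub_nonneg.mpr (hψ y hy)) (exp_pos _).le) (by simp [h0]) hx

end

/-- Key one-variable lemma: if `φ(0) = 0` and `φ'' + γφ' ≥ 0` on `ℝ`, then
`φ(x)e^{γx} + φ(-x) ≥ 0` for all `x ≥ 0`. -/
theorem stmt_11 (γ : ℝ) (φ φ' φ'' : ℝ → ℝ)
    (hφ' : ∀ x : ℝ, HasDerivAt φ (φ' x) x)
    (hφ'' : ∀ x : ℝ, HasDerivAt φ' (φ'' x) x)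
    (h0 : φ 0 = 0)
    (hineq : ∀ x : ℝ, 0 ≤ φ'' x + γ * φ' x) :
    ∀ x ≥ (0:ℝ), 0 ≤ φ x * Real.exp (γ * x) + φ (-x) := by
  intro x hx
  have hw := add_reflect_mul_exp_nonneg hφ' h0
    (fun y hy => reflect_le_deriv_mul_exp hφ' hφ'' h0 hineq hy) hx
  have hrw : φ x * exp (γ * x) + φ (-x) = (φ x + φ (-x) * exp (-(γ * x))) * exp (γ * x) := by
    rw [add_mul, mul_assoc, ← exp_add]
    simp
  rw [hrw]
  exact mul_nonneg hw (exp_pos _).le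
end

section
/- Fix an integer k ≥ 2 and an integer n ≥ 2k; set α = 2k/(k+1), a = (n+α)/2, b = (α + n/k − 2)/2, c = n/2 (so that a > c > b + 1 > 1). Let φ(r) = F(a,b,c,−r²) for r ≥ 0, with F given by Euler's integral (valid since c > b > 0). Then φ is positive and smooth on [0,∞), and for every r > 0: φ''(r) + (k−1)·φ'(r)²/φ(r) + (n − α + 1)·φ'(r)/r ≤ 0. Equivalently, the function r ↦ φ(r)^k satisfies (φ^k)''(r) + (n − α + 1)(φ^k)'(r)/r ≤ 0 for all r > 0. -/
/-!
Write `E(p,q,e; x) = ∫₀¹ tᵖ (1-t)^q (1-tx)ᵉ dt`, so that `φ(r) = C·E(b-1, c-b-1, -a; -r²)`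
with `C > 0`. Differentiating under the integral sign, `∂ₓE(p,q,e) = -e·E(p+1,q,e-1)`; hence,
with `e = -a ≤ 0`, `φ' = 2Ce·r·E₁` and `φ'' = 2Ce·(E₁ + 2(e-1)r²E₂)`. Integrating
`d/dt [t^(p+1) (1-t)^q (1-tx)ᵉ]` over `[0,1]` gives the contiguous relation
`(p+1)·E(p,q,e) - e·x·E(p+1,q,e-1) = q·E(p+1,q-1,e) > 0`, i.e. `a r² E₁ < b E₀` and
`(a+1) r² E₂ < (b+1) E₁`. Plugging these into the bracket multiplying `2Ce ≤ 0` bounds it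
below by `(n - α + 1 - 2kb - 1)·E₁`, which vanishes for the Hessian Sobolev exponents.
The inequality for `φᵏ` follows from `(φᵏ)'' + m(φᵏ)'/r = kφᵏ⁻¹·(φ'' + (k-1)φ'²/φ + mφ'/r)`.
-/

/-- The Gaussian hypergeometric function via Euler's integral (valid for `c > b > 0`). -/
noncomputable def Fhyp (a b c x : ℝ) : ℝ :=
  (Real.Gamma c / (Real.Gamma b * Real.Gamma (c - b))) *
    ∫ t in (0:ℝ)..1, t ^ (b - 1) * (1 - t) ^ (c - b - 1) * (1 - t * x) ^ (-a)

open MeasureTheory Set intervalIntegral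
open scoped ContDiff

noncomputable def eulerIntegral (p q e x : ℝ) : ℝ :=
  ∫ t in (0:ℝ)..1, t ^ p * (1 - t) ^ q * (1 - t * x) ^ e

lemma min_one_one_sub_le_one_sub_mul {t y : ℝ} (ht₀ : 0 ≤ t) (ht₁ : t ≤ 1) :
    min 1 (1 - y) ≤ 1 - t * y := by
  rcases le_or_gt y 0 with hy | hy
  · exact (min_le_left _ _).trans (by nlinarith)
  · exact (min_le_right _ _).trans (by nlinarith)

lemma one_sub_mul_pos {t x : ℝ} (ht₀ : 0 ≤ t) (ht₁ : t ≤ 1) (hx : x < 1) : 0 < 1 - t * x :=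
  (lt_min one_pos (sub_pos.2 hx)).trans_le (min_one_one_sub_le_one_sub_mul ht₀ ht₁)

lemma neg_sq_lt_one (r : ℝ) : -r ^ 2 < 1 := by
  linarith [sq_nonneg r]

lemma intervalIntegrable_rpow_mul_one_sub_rpow {p q : ℝ} (hp : -1 < p) (hq : -1 < q) :
    IntervalIntegrable (fun t : ℝ => t ^ p * (1 - t) ^ q) volume 0 1 := by
  have hleft : IntervalIntegrable (fun t : ℝ => t ^ p * (1 - t) ^ q) volume 0 (1 / 2) := by
    refine (intervalIntegrable_rpow' hp).mul_continuousOn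
      ((continuousOn_const.sub continuousOn_id).rpow_const fun t ht => Or.inl ?_)
    rw [uIcc_of_le (by norm_num)] at ht
    exact sub_ne_zero.2 (by linarith [ht.2] : (1:ℝ) ≠ t)
  have hright : IntervalIntegrable (fun t : ℝ => t ^ p * (1 - t) ^ q) volume (1 / 2) 1 := by
    have h := (intervalIntegrable_rpow' (a := 1 / 2) (b := 0) hq).comp_sub_left 1
    rw [show (1:ℝ) - 1 / 2 = 1 / 2 by norm_num, sub_zero] at h
    refine h.continuousOn_mul (continuousOn_id.rpow_const fun t ht => Or.inl ?_)
    rw [uIcc_of_le (by norm_num)] at ht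
    exact (by linarith [ht.1] : t ≠ 0)
  exact hleft.trans hright

lemma intervalIntegrable_eulerIntegrand {p q x : ℝ} (e : ℝ) (hp : -1 < p) (hq : -1 < q)
    (hx : x < 1) :
    IntervalIntegrable (fun t : ℝ => t ^ p * (1 - t) ^ q * (1 - t * x) ^ e) volume 0 1 := by
  refine (intervalIntegrable_rpow_mul_one_sub_rpow hp hq).mul_continuousOn
    ((continuous_const.sub (continuous_id.mul continuous_const)).continuousOn.rpow_const
      fun t ht => Or.inl ?_)
  rw [uIcc_of_le zero_le_one] at ht
  exact (one_sub_mul_pos ht.1 ht.2 hx).ne'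

lemma eulerIntegral_pos {p q x : ℝ} (e : ℝ) (hp : -1 < p) (hq : -1 < q) (hx : x < 1) :
    0 < eulerIntegral p q e x := by
  refine intervalIntegral_pos_of_pos_on (intervalIntegrable_eulerIntegrand e hp hq hx)
    (fun t ht => ?_) one_pos
  have h₁ : 0 < 1 - t := by linarith [ht.2]
  have h₂ := one_sub_mul_pos ht.1.le ht.2.le hx
  have h₀ := ht.1
  positivity

lemma hasDerivAt_rpow_mul_rpow_mul_rpow {p q e x t : ℝ} (ht₀ : 0 < t) (ht₁ : t < 1)
    (hx : x < 1) :
    HasDerivAt (fun s : ℝ => s ^ (p + 1) * (1 - s) ^ q * (1 - s * x) ^ e)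
      ((p + 1) * (t ^ p * (1 - t) ^ q * (1 - t * x) ^ e)
        - e * x * (t ^ (p + 1) * (1 - t) ^ q * (1 - t * x) ^ (e - 1))
        - q * (t ^ (p + 1) * (1 - t) ^ (q - 1) * (1 - t * x) ^ e)) t := by
  have h₁ := Real.hasDerivAt_rpow_const (x := t) (p := p + 1) (Or.inl ht₀.ne')
  have h₂ := ((hasDerivAt_id t).const_sub 1).rpow_const (p := q) (Or.inl (sub_pos.2 ht₁).ne')
  have h₃ := (((hasDerivAt_id t).mul_const x).const_sub 1).rpow_const (p := e)
    (Or.inl (one_sub_mul_pos ht₀.le ht₁.le hx).ne')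
  refine ((h₁.fun_mul h₂).fun_mul h₃).congr_deriv ?_
  simp only [add_sub_cancel_right, id]
  ring

theorem eulerIntegral_contiguous {p q x : ℝ} (e : ℝ) (hp : -1 < p) (hq : 0 < q) (hx : x < 1) :
    (p + 1) * eulerIntegral p q e x - e * x * eulerIntegral (p + 1) q (e - 1) x
      = q * eulerIntegral (p + 1) (q - 1) e x := by
  have hi₁ := intervalIntegrable_eulerIntegrand (q := q) e hp (by linarith) hx
  have hi₂ := intervalIntegrable_eulerIntegrand (q := q) (e - 1) (p := p + 1) (by linarith)
    (by linarith) hx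
  have hi₃ := intervalIntegrable_eulerIntegrand (q := q - 1) e (p := p + 1) (by linarith)
    (by linarith) hx
  have hcont : ContinuousOn (fun s : ℝ => s ^ (p + 1) * (1 - s) ^ q * (1 - s * x) ^ e)
      (Icc 0 1) := by
    refine ((continuousOn_id.rpow_const fun _ _ => Or.inr (by linarith)).mul
      ((continuousOn_const.sub continuousOn_id).rpow_const fun _ _ => Or.inr hq.le)).mul
      ((continuousOn_const.sub (continuousOn_id.mul continuousOn_const)).rpow_const
        fun s hs => Or.inl (one_sub_mul_pos hs.1 hs.2 hx).ne')
  have hftc := integral_eq_sub_of_hasDeriv_right_of_le zero_le_one hcont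
    (fun t ht => (hasDerivAt_rpow_mul_rpow_mul_rpow ht.1 ht.2 hx).hasDerivWithinAt)
    (((hi₁.const_mul (p + 1)).sub (hi₂.const_mul (e * x))).sub (hi₃.const_mul q))
  rw [integral_sub ((hi₁.const_mul _).sub (hi₂.const_mul _)) (hi₃.const_mul _),
    integral_sub (hi₁.const_mul _) (hi₂.const_mul _), intervalIntegral.integral_const_mul,
    intervalIntegral.integral_const_mul, intervalIntegral.integral_const_mul] at hftc
  rw [sub_self, Real.zero_rpow (by linarith : p + 1 ≠ 0), Real.zero_rpow hq.ne'] at hftc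
  simp only [mul_zero, zero_mul, sub_zero] at hftc
  unfold eulerIntegral
  linarith

theorem mul_eulerIntegral_lt {p q x : ℝ} (e : ℝ) (hp : -1 < p) (hq : 0 < q) (hx : x < 1) :
    e * x * eulerIntegral (p + 1) q (e - 1) x < (p + 1) * eulerIntegral p q e x := by
  have h := eulerIntegral_pos e (by linarith : -1 < p + 1) (by linarith : -1 < q - 1) hx
  nlinarith [eulerIntegral_contiguous e hp hq hx]

theorem hasDerivAt_eulerIntegral {p q e x : ℝ} (hp : -1 < p) (hq : -1 < q) (he : e ≤ 0)
    (hx : x < 1) :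
    HasDerivAt (eulerIntegral p q e) (-e * eulerIntegral (p + 1) q (e - 1) x) x := by
  set ε := (1 - x) / 2
  have hε : 0 < ε := by simp only [ε]; linarith
  set m := min 1 ε
  have hm : 0 < m := lt_min one_pos hε
  have hbase : ∀ t ∈ Ioc (0:ℝ) 1, ∀ y ∈ Metric.ball x ε, m ≤ 1 - t * y := by
    intro t ht y hy
    have hy' : ε ≤ 1 - y := by
      have := (abs_lt.mp (Real.dist_eq y x ▸ Metric.mem_ball.mp hy)).2
      simp only [ε] at this ⊢
      linarith
    exact (min_le_min_left 1 hy').trans (min_one_one_sub_le_one_sub_mul ht.1.le ht.2)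
  have key := hasDerivAt_integral_of_dominated_loc_of_deriv_le (μ := volume) (a := 0) (b := 1)
    (F := fun y t => t ^ p * (1 - t) ^ q * (1 - t * y) ^ e)
    (F' := fun y t => -e * (t ^ (p + 1) * (1 - t) ^ q * (1 - t * y) ^ (e - 1)))
    (bound := fun t => -e * m ^ (e - 1) * (t ^ p * (1 - t) ^ q))
    (Metric.ball_mem_nhds x hε)
    (Filter.Eventually.of_forall fun y => (by fun_prop : Measurable fun t : ℝ =>
      t ^ p * (1 - t) ^ q * (1 - t * y) ^ e).aestronglyMeasurable)
    (intervalIntegrable_eulerIntegrand e hp hq hx)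
    ((by fun_prop : Measurable fun t : ℝ =>
      -e * (t ^ (p + 1) * (1 - t) ^ q * (1 - t * x) ^ (e - 1))).aestronglyMeasurable)
    ?_ ((intervalIntegrable_rpow_mul_one_sub_rpow hp hq).const_mul _) ?_
  · have h := key.2
    rw [intervalIntegral.integral_const_mul] at h
    exact h
  · refine Filter.Eventually.of_forall fun t ht y hy => ?_
    rw [uIoc_of_le zero_le_one] at ht
    have hty := hbase t ht y hy
    have h₁ : 0 ≤ 1 - t := by linarith [ht.2]
    have h₂ : 0 < 1 - t * y := hm.trans_le hty
    have hpow : t ^ (p + 1) ≤ t ^ p :=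
      Real.rpow_le_rpow_of_exponent_ge ht.1 ht.2 (by linarith)
    have hrpow : (1 - t * y) ^ (e - 1) ≤ m ^ (e - 1) :=
      Real.rpow_le_rpow_of_nonpos hm hty (by linarith)
    have h₀ := ht.1.le
    have he' := neg_nonneg.2 he
    rw [Real.norm_eq_abs, abs_of_nonneg (by positivity)]
    calc -e * (t ^ (p + 1) * (1 - t) ^ q * (1 - t * y) ^ (e - 1))
        ≤ -e * (t ^ p * (1 - t) ^ q * m ^ (e - 1)) := by
          gcongr
      _ = -e * m ^ (e - 1) * (t ^ p * (1 - t) ^ q) := by ring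
  · refine Filter.Eventually.of_forall fun t ht y _ => ?_
    rw [uIoc_of_le zero_le_one] at ht
    have h := (((hasDerivAt_id y).const_mul t).const_sub 1).rpow_const (p := e)
      (Or.inl (hm.trans_le (hbase t ht y ‹_›)).ne')
    refine (h.const_mul (t ^ p * (1 - t) ^ q)).congr_deriv ?_
    rw [Real.rpow_add_one ht.1.ne']
    simp only [id]
    ring

theorem contDiffOn_eulerIntegral {q : ℝ} (hq : -1 < q) {p e : ℝ} (hp : -1 < p) (he : e ≤ 0) :
    ContDiffOn ℝ ∞ (eulerIntegral p q e) (Iio 1) := by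
  rw [contDiffOn_infty]
  intro N
  induction N generalizing p e with
  | zero =>
    exact contDiffOn_zero.2 fun x hx =>
      (hasDerivAt_eulerIntegral hp hq he hx).continuousAt.continuousWithinAt
  | succ N ih =>
    rw [Nat.cast_succ, contDiffOn_succ_iff_deriv_of_isOpen isOpen_Iio]
    refine ⟨fun x hx => (hasDerivAt_eulerIntegral hp hq he hx).differentiableAt
      |>.differentiableWithinAt, by simp, ?_⟩
    exact (contDiffOn_const.mul (ih (by linarith) (by linarith))).congr fun x hx =>
      (hasDerivAt_eulerIntegral hp hq he hx).deriv

theorem hasDerivAt_eulerIntegral_neg_sq {p q e : ℝ} (hp : -1 < p) (hq : -1 < q) (he : e ≤ 0)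
    (r : ℝ) :
    HasDerivAt (fun s => eulerIntegral p q e (-s ^ 2))
      (2 * e * r * eulerIntegral (p + 1) q (e - 1) (-r ^ 2)) r := by
  refine ((hasDerivAt_eulerIntegral hp hq he (neg_sq_lt_one r)).comp r
    (hasDerivAt_pow 2 r).neg).congr_deriv ?_
  push_cast
  ring

theorem eulerIntegral_neg_sq_radial_ineq {p q e C k m r : ℝ} (hp : -1 < p) (hq : 0 < q)
    (he : e ≤ 0) (hC : 0 < C) (hk : 1 ≤ k) (hm : 2 * k * (p + 1) + 1 ≤ m) (hr : 0 < r) :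
    deriv (deriv fun s => C * eulerIntegral p q e (-s ^ 2)) r
      + (k - 1) * deriv (fun s => C * eulerIntegral p q e (-s ^ 2)) r ^ 2
        / (C * eulerIntegral p q e (-r ^ 2))
      + m * deriv (fun s => C * eulerIntegral p q e (-s ^ 2)) r / r ≤ 0 := by
  have hx := neg_sq_lt_one r
  have hq' : -1 < q := by linarith
  set E₀ := eulerIntegral p q e (-r ^ 2)
  set E₁ := eulerIntegral (p + 1) q (e - 1) (-r ^ 2)
  set E₂ := eulerIntegral (p + 1 + 1) q (e - 1 - 1) (-r ^ 2)
  have hderiv : deriv (fun s => C * eulerIntegral p q e (-s ^ 2)) =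
      fun s => C * (2 * e * s * eulerIntegral (p + 1) q (e - 1) (-s ^ 2)) :=
    funext fun s => ((hasDerivAt_eulerIntegral_neg_sq hp hq' he s).const_mul C).deriv
  have hderiv₂ : HasDerivAt (fun s => C * (2 * e * s * eulerIntegral (p + 1) q (e - 1) (-s ^ 2)))
      (C * (2 * e * (E₁ + r * (2 * (e - 1) * r * E₂)))) r := by
    have h := ((hasDerivAt_id r).const_mul (2 * e)).mul
      (hasDerivAt_eulerIntegral_neg_sq (p := p + 1) (e := e - 1) (by linarith) hq' (by linarith) r)
    refine (h.const_mul C).congr_deriv ?_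
    simp only [id, E₁, E₂]
    ring
  rw [hderiv, hderiv₂.deriv]
  have hE₀ : 0 < E₀ := eulerIntegral_pos e hp hq' hx
  have hE₁ : 0 < E₁ := eulerIntegral_pos _ (by linarith) hq' hx
  have key₁ := mul_eulerIntegral_lt e hp hq hx
  have key₂ := mul_eulerIntegral_lt (e - 1) (by linarith : -1 < p + 1) hq hx
  have hfrac : -(p + 1) * E₁ ≤ e * r ^ 2 * E₁ ^ 2 / E₀ := by
    rw [le_div_iff₀ hE₀]
    nlinarith [mul_le_mul_of_nonneg_right key₁.le hE₁.le]
  have hbracket : 0 ≤ E₁ + 2 * (e - 1) * r ^ 2 * E₂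
      + 2 * (k - 1) * (e * r ^ 2 * E₁ ^ 2 / E₀) + m * E₁ := by
    nlinarith [mul_le_mul_of_nonneg_left hfrac (by linarith : (0:ℝ) ≤ k - 1),
      mul_le_mul_of_nonneg_right hm hE₁.le, key₂]
  calc _ = 2 * C * e * (E₁ + 2 * (e - 1) * r ^ 2 * E₂
          + 2 * (k - 1) * (e * r ^ 2 * E₁ ^ 2 / E₀) + m * E₁) := by
        field_simp
        ring
    _ ≤ 0 := mul_nonpos_of_nonpos_of_nonneg (by nlinarith) hbracket

theorem deriv_deriv_pow_add_div {φ : ℝ → ℝ} {r : ℝ} (hφ : Differentiable ℝ φ)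
    (hφ' : DifferentiableAt ℝ (deriv φ) r) (hφr : φ r ≠ 0) (k : ℕ) (m : ℝ) :
    deriv (deriv fun t => φ t ^ k) r + m * deriv (fun t => φ t ^ k) r / r
      = k * φ r ^ (k - 1)
        * (deriv (deriv φ) r + (k - 1) * deriv φ r ^ 2 / φ r + m * deriv φ r / r) := by
  have hd : deriv (fun t => φ t ^ k) = fun t => k * φ t ^ (k - 1) * deriv φ t :=
    funext fun t => deriv_fun_pow (hφ t) k
  have hd₂ := (((hφ r).hasDerivAt.fun_pow (k - 1)).const_mul (k : ℝ)).fun_mul hφ'.hasDerivAt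
  rw [hd, hd₂.deriv]
  rcases k with _ | _ | k
  · simp
  · simp
  · simp only [Nat.add_sub_cancel, Nat.cast_add, Nat.cast_one, pow_succ]
    field_simp
    ring

theorem hessianSobolev_parameters {k n : ℕ} {α a b c : ℝ} (hk : 2 ≤ k) (hn : 2 * k ≤ n)
    (hα : α = 2 * k / (k + 1)) (ha : a = ((n : ℝ) + α) / 2)
    (hb : b = (α + (n : ℝ) / k - 2) / 2) (hc : c = (n : ℝ) / 2) :
    0 < b ∧ 0 < c - b - 1 ∧ 0 ≤ a ∧ (n : ℝ) - α + 1 = 2 * k * b + 1 := by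
  have hk' : (2 : ℝ) ≤ k := by exact_mod_cast hk
  have hn' : 2 * (k : ℝ) ≤ n := by exact_mod_cast hn
  have hα₀ : 0 < α := by rw [hα]; positivity
  have hα₂ : α < 2 := by rw [hα, div_lt_iff₀ (by linarith)]; linarith
  have hnk : 2 ≤ (n : ℝ) / k := (le_div_iff₀ (by linarith)).2 (by linarith)
  have hnk' : (n : ℝ) / k ≤ n / 2 := div_le_div_of_nonneg_left (by linarith) two_pos hk'
  have hαk : α * (k + 1) = 2 * k := by rw [hα]; field_simp
  have hkn : (k : ℝ) * (n / k) = n := by field_simp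
  refine ⟨by rw [hb]; linarith, by rw [hb, hc]; linarith, by rw [ha]; linarith, ?_⟩
  rw [hb]
  linear_combination -hαk - hkn

/-- For the Hessian Sobolev parameters, `φ(r) = F(a,b,c,-r²)` is positive and smooth on
`[0,∞)` and satisfies `φ'' + (k-1)(φ')²/φ + (n-α+1)φ'/r ≤ 0`; equivalently
`(φ^k)'' + (n-α+1)(φ^k)'/r ≤ 0` on `(0,∞)`. -/
theorem stmt_13 (k n : ℕ) (hk : 2 ≤ k) (hn : 2 * k ≤ n)
    (α a b c : ℝ)
    (hα : α = 2 * k / (k + 1)) (ha : a = ((n : ℝ) + α) / 2)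
    (hb : b = (α + (n : ℝ) / k - 2) / 2) (hc : c = (n : ℝ) / 2)
    (φ : ℝ → ℝ) (hφ : φ = fun r => Fhyp a b c (-r ^ 2)) :
    (∀ r ≥ (0:ℝ), 0 < φ r) ∧ ContDiffOn ℝ (⊤ : ℕ∞) φ (Set.Ici 0) ∧
    (∀ r > (0:ℝ),
      deriv (deriv φ) r + ((k : ℝ) - 1) * (deriv φ r) ^ 2 / φ r +
        ((n : ℝ) - α + 1) * deriv φ r / r ≤ 0) ∧
    (∀ r > (0:ℝ),
      deriv (deriv (fun t => φ t ^ k)) r +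
        ((n : ℝ) - α + 1) * deriv (fun t => φ t ^ k) r / r ≤ 0) := by
  obtain ⟨hb₀, hq, ha₀, hm⟩ := hessianSobolev_parameters hk hn hα ha hb hc
  set C := Real.Gamma c / (Real.Gamma b * Real.Gamma (c - b))
  have hC : 0 < C := div_pos (Real.Gamma_pos_of_pos (by linarith))
    (mul_pos (Real.Gamma_pos_of_pos hb₀) (Real.Gamma_pos_of_pos (by linarith)))
  have hφ : φ = fun r => C * eulerIntegral (b - 1) (c - b - 1) (-a) (-r ^ 2) := hφ
  have hp : -1 < b - 1 := by linarith
  have hpos (r : ℝ) : 0 < φ r :=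
    hφ ▸ mul_pos hC (eulerIntegral_pos _ hp (by linarith) (neg_sq_lt_one r))
  have hsmooth : ContDiff ℝ ∞ φ := hφ ▸ contDiff_const.mul
    ((contDiffOn_eulerIntegral (by linarith) hp (by linarith)).comp_contDiff
      (contDiff_id.pow 2).neg neg_sq_lt_one)
  have hineq : ∀ r > (0:ℝ), deriv (deriv φ) r + ((k : ℝ) - 1) * (deriv φ r) ^ 2 / φ r +
      ((n : ℝ) - α + 1) * deriv φ r / r ≤ 0 := fun r hr => hφ ▸
    eulerIntegral_neg_sq_radial_ineq hp hq (by linarith) hC (by exact_mod_cast (by omega : 1 ≤ k))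
      (by rw [sub_add_cancel, hm]) hr
  obtain ⟨hdiff, hsmooth'⟩ := contDiff_infty_iff_deriv.1 hsmooth
  refine ⟨fun r _ => hpos r, hsmooth.contDiffOn, hineq, fun r hr => ?_⟩
  rw [deriv_deriv_pow_add_div hdiff (hsmooth'.differentiable (by simp) r) (hpos r).ne']
  exact mul_nonpos_of_nonneg_of_nonpos (by have := hpos r; positivity) (hineq r hr)
end

section
/- Fix an integer k ≥ 2 and an integer n ≥ 2k; set α = 2k/(k+1), a = (n+α)/2, b = (α + n/k − 2)/2, c = n/2, d₁ = 2a + b − 2c, d₂ = c − a + 1, d₃ = 4a(2c − a − b). Then the function g(t) = [d₁ t − d₂(1−t) + √((d₁ t − d₂(1−t))² + d₃ t)] / (2c) is concave on [0, ∞). -/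
/-!
Writing `S = d₁ + d₂`, the function is `(S t - d₂ + √(A t² + B t + C)) / (2c)` with `A = S²`,
`B = d₃ - 2 d₂ S`, `C = d₂²`, whose discriminant is `B² - 4AC = d₃ (d₃ - 4 d₂ S)`. For the given
parameters `d₂ = 1/(k+1)`, `S > 0` and `d₃ ≥ 4 d₂ S`, so `A t² + B t + C` has nonnegative
coefficients and real roots, hence factors on `[0, ∞)` as a product of two nonnegative affine
functions. The geometric mean of two nonnegative concave functions is concave (Cauchy–Schwarz), so
the square root is concave, and so is `g`.
-/

open Set

namespace Real

theorem mul_sqrt_mul_add_mul_sqrt_mul_le {p₁ q₁ p₂ q₂ a b : ℝ} (hp₁ : 0 ≤ p₁) (hq₁ : 0 ≤ q₁)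
    (hp₂ : 0 ≤ p₂) (hq₂ : 0 ≤ q₂) (ha : 0 ≤ a) (hb : 0 ≤ b) :
    a * √(p₁ * q₁) + b * √(p₂ * q₂) ≤ √((a * p₁ + b * p₂) * (a * q₁ + b * q₂)) := by
  have hsplit : ∀ {w p q : ℝ}, 0 ≤ w → 0 ≤ p → w * √(p * q) = √(w * p) * √(w * q) :=
    fun {w p q} hw hp => by
      rw [← sqrt_mul (mul_nonneg hw hp), mul_mul_mul_comm, sqrt_mul (mul_self_nonneg w),
        sqrt_mul_self hw]
  have := sum_sqrt_mul_sqrt_le Finset.univ (f := ![a * p₁, b * p₂]) (g := ![a * q₁, b * q₂])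
    (Fin.forall_fin_two.2 ⟨mul_nonneg ha hp₁, mul_nonneg hb hp₂⟩)
    (Fin.forall_fin_two.2 ⟨mul_nonneg ha hq₁, mul_nonneg hb hq₂⟩)
  simp only [Fin.sum_univ_two, Matrix.cons_val_zero, Matrix.cons_val_one] at this
  rwa [hsplit ha hp₁, hsplit hb hp₂, sqrt_mul (by positivity) (a * q₁ + b * q₂)]

end Real

theorem ConcaveOn.sqrt_mul {E : Type*} [AddCommMonoid E] [Module ℝ E] {s : Set E} {f g : E → ℝ}
    (hf : ConcaveOn ℝ s f) (hg : ConcaveOn ℝ s g) (hf₀ : ∀ x ∈ s, 0 ≤ f x)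
    (hg₀ : ∀ x ∈ s, 0 ≤ g x) : ConcaveOn ℝ s fun x => √(f x * g x) := by
  refine ⟨hf.1, fun x hx y hy a b ha hb hab => ?_⟩
  calc a • √(f x * g x) + b • √(f y * g y)
      ≤ √((a * f x + b * f y) * (a * g x + b * g y)) :=
        Real.mul_sqrt_mul_add_mul_sqrt_mul_le (hf₀ x hx) (hg₀ x hx) (hf₀ y hy) (hg₀ y hy) ha hb
    _ ≤ √(f (a • x + b • y) * g (a • x + b • y)) := by
        refine Real.sqrt_le_sqrt (mul_le_mul (hf.2 hx hy ha hb hab) (hg.2 hx hy ha hb hab)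
          (by have := hg₀ x hx; have := hg₀ y hy; positivity) (hf₀ _ (hf.1 hx hy ha hb hab)))

theorem concaveOn_mul_add (m c : ℝ) {s : Set ℝ} (hs : Convex ℝ s) :
    ConcaveOn ℝ s fun t => m * t + c :=
  ((LinearMap.mulLeft ℝ m).concaveOn hs).add_const c

theorem concaveOn_sqrt_quadratic {A B C : ℝ} (hA : 0 < A) (hB : 0 ≤ B) (hC : 0 ≤ C)
    (hdisc : 4 * A * C ≤ B ^ 2) : ConcaveOn ℝ (Ici 0) fun t => √(A * t ^ 2 + B * t + C) := by
  set s := √(B ^ 2 - 4 * A * C)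
  have hs : s ^ 2 = B ^ 2 - 4 * A * C := Real.sq_sqrt (by linarith)
  have hs₀ : 0 ≤ s := Real.sqrt_nonneg _
  have hsB : s ≤ B := by nlinarith
  have hfactor : ∀ t, A * t ^ 2 + B * t + C = (A * t + (B + s) / 2) * (t + (B - s) / (2 * A)) := by
    intro t
    field_simp
    linear_combination hs
  refine ((concaveOn_mul_add A ((B + s) / 2) (convex_Ici 0)).sqrt_mul
    ((concaveOn_id (convex_Ici 0)).add_const ((B - s) / (2 * A)))
    (fun t (ht : 0 ≤ t) => by positivity)
    (fun t (ht : 0 ≤ t) => add_nonneg ht (div_nonneg (by linarith) (by positivity)))).congr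
    fun t _ => by rw [hfactor]; rfl

theorem concaveOn_add_sqrt_sq_add {S d₂ d₃ : ℝ} (hS : 0 < S) (hd₂ : 0 ≤ d₂) (hd₃ : 4 * d₂ * S ≤ d₃) :
    ConcaveOn ℝ (Ici 0) fun t => S * t - d₂ + √((S * t - d₂) ^ 2 + d₃ * t) := by
  have hd₂S : 0 ≤ d₂ * S := mul_nonneg hd₂ hS.le
  have hsqrt := concaveOn_sqrt_quadratic (B := d₃ - 2 * d₂ * S) (C := d₂ ^ 2) (pow_pos hS 2)
    (by linarith) (sq_nonneg _) (by nlinarith)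
  refine ((concaveOn_mul_add S (-d₂) (convex_Ici 0)).add hsqrt).congr fun t _ => ?_
  simp only [Pi.add_apply]
  ring_nf

/-- For the Hessian Sobolev parameters, the function
`g(t) = [d₁t - d₂(1-t) + √((d₁t - d₂(1-t))² + d₃t)]/(2c)` is concave on `[0,∞)`. -/
theorem stmt_17 (k n : ℕ) (hk : 2 ≤ k) (hn : 2 * k ≤ n)
    (α a b c d₁ d₂ d₃ : ℝ)
    (hα : α = 2 * k / (k + 1)) (ha : a = ((n : ℝ) + α) / 2)
    (hb : b = (α + (n : ℝ) / k - 2) / 2) (hc : c = (n : ℝ) / 2)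
    (hd₁ : d₁ = 2 * a + b - 2 * c) (hd₂ : d₂ = c - a + 1)
    (hd₃ : d₃ = 4 * a * (2 * c - a - b)) :
    ConcaveOn ℝ (Set.Ici 0)
      (fun t => (d₁ * t - d₂ * (1 - t) +
        Real.sqrt ((d₁ * t - d₂ * (1 - t)) ^ 2 + d₃ * t)) / (2 * c)) := by
  have hK : (2 : ℝ) ≤ k := by exact_mod_cast hk
  have hN : 2 * (k : ℝ) ≤ n := by exact_mod_cast hn
  have hk₀ : (k : ℝ) ≠ 0 := by positivity
  have hd₂_eq : d₂ = 1 / (k + 1) := by subst_vars; field_simp; ring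
  have hS_eq : d₁ + d₂ = (4 * k ^ 2 + n * (k + 1)) / (2 * k * (k + 1)) := by
    subst_vars; field_simp; ring
  have hgap_eq : d₃ - 4 * d₂ * (d₁ + d₂) =
      ((k - 1) * (n * (k + 1)) ^ 2 - 2 * (n * (k + 1)) - 4 * k ^ 2 * (k + 1)) / (k * (k + 1) ^ 2) := by
    subst_vars; field_simp; ring
  have hgap : 4 * d₂ * (d₁ + d₂) ≤ d₃ := by
    -- the numerator is increasing in `M = n(k+1) ≥ 2k(k+1)`, where it equals `4k(k+1)²(k²-k-1)`
    have hM : 2 * k * (k + 1) ≤ (n : ℝ) * (k + 1) := by nlinarith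
    have : 0 ≤ d₃ - 4 * d₂ * (d₁ + d₂) := by
      rw [hgap_eq]
      refine div_nonneg ?_ (by positivity)
      nlinarith [mul_le_mul hM hM (by positivity) (by positivity)]
    linarith
  have hc₀ : 0 < c := by rw [hc]; linarith
  refine ((concaveOn_add_sqrt_sq_add (by rw [hS_eq]; positivity) (by rw [hd₂_eq]; positivity)
    hgap).smul (inv_nonneg.2 (mul_pos two_pos hc₀).le)).congr fun t _ => ?_
  simp only [smul_eq_mul]
  ring_nf
end
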